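/- Let u_h → u uniformly on ℝⁿ, where each u_h ∈ BV(ℝⁿ) is nonnegative, supported in a fixed compact set K ⊂ Ω, and satisfies the outward minimality property ∫|Du_h| ≤ ∫|Dv| for all v ∈ BV(ℝⁿ) with v ≥ u_h and v = 0 on ℝⁿ ∖ Ω, and u ∈ BV(ℝⁿ) is continuous with support in K. Then limsup_{h↓0} ∫|Du_h| ≤ ∫|Du|, and hence by lower semicontinuity ∫|Du_h| → ∫|Du|. -/

import Mathlib

open MeasureTheory ENNReal Set Filter Bornology Topology

noncomputable section

abbrev Euc (n : ℕ) := EuclideanSpace ℝ (Fin n)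

variable {n : ℕ}

/-- Divergence of a vector field on `ℝⁿ`. -/
def diverg (ξ : Euc n → Euc n) (x : Euc n) : ℝ :=
  ∑ i, fderiv ℝ ξ x (EuclideanSpace.single i 1) i

/-- Admissible test vector fields: `C¹`, compactly supported, bounded by one. -/
def testVF (n : ℕ) : Set (Euc n → Euc n) :=
  {ξ | ContDiff ℝ 1 ξ ∧ HasCompactSupport ξ ∧ ∀ x, ‖ξ x‖ ≤ 1}

/-- De Giorgi perimeter of a set in `ℝⁿ`. -/
def perimeter (E : Set (Euc n)) : ℝ≥0∞ :=
  ⨆ ξ ∈ testVF n, ENNReal.ofReal (∫ x in E, diverg ξ x)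

/-- Total variation of a function on `ℝⁿ`. -/
def totalVariation (u : Euc n → ℝ) : ℝ≥0∞ :=
  ⨆ ξ ∈ testVF n, ENNReal.ofReal (∫ x, u x * diverg ξ x)

/-- `E` is outward minimizing in `Ω`. -/
def OutwardMinimizing (Ω E : Set (Euc n)) : Prop :=
  ∀ F : Set (Euc n), MeasurableSet F → E ⊆ F → F ⊆ Ω → perimeter E ≤ perimeter F

/-- Distance to the topological boundary of `F`. -/
def bdist (F : Set (Euc n)) (x : Euc n) : ℝ := Metric.infDist x (frontier F)

/-- Signed distance to the boundary of `F`: negative inside `F`, positive outside. -/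
def sdist (F : Set (Euc n)) (x : Euc n) : ℝ :=
  haveI := Classical.dec (x ∈ F)
  if x ∈ F then -(bdist F x) else bdist F x

/-- The Almgren–Taylor–Wang functional `F_h(E, F) = P(E) + (1/h) ∫_{E Δ F} d_F`. -/
def ATW (h : ℝ) (E F : Set (Euc n)) : ℝ≥0∞ :=
  perimeter E + ENNReal.ofReal (1 / h) * ∫⁻ x in symmDiff E F, ENNReal.ofReal (bdist F x)

/-! The competitor `v + ε η`, with `η` a cutoff equal to `1` on `K` and vanishing off `Ω`, lies
above `u h` as soon as `u h` is uniformly `ε`-close to `v`, so outward minimality gives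
`|D(u h)| ≤ |Dv| + ε |Dη|`; letting `ε → 0` bounds the limsup. The reverse inequality for the
liminf is lower semicontinuity: for each test field `ξ`, `∫ u h · div ξ → ∫ v · div ξ` under
uniform convergence, and `|Dv|` is the supremum of these integrals. -/

theorem exists_contDiff_cutoff {E : Type*} [NormedAddCommGroup E] [NormedSpace ℝ E]
    [FiniteDimensional ℝ E] {K U : Set E} (hK : IsCompact K) (hU : IsOpen U) (hKU : K ⊆ U)
    (k : ℕ∞) :
    ∃ η : E → ℝ, ContDiff ℝ k η ∧ HasCompactSupport η ∧ (∀ x ∈ K, η x = 1) ∧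
      (∀ x ∉ U, η x = 0) ∧ ∀ x, 0 ≤ η x := by
  obtain ⟨δ, hδ, hδU⟩ := hK.exists_cthickening_subset_open hU hKU
  have hK_int : K ⊆ interior (Metric.cthickening δ K) :=
    (Metric.self_subset_thickening hδ K).trans
      (interior_maximal (Metric.thickening_subset_cthickening δ K) Metric.isOpen_thickening)
  obtain ⟨f, hf1, hf0, hf01⟩ := exists_contMDiffMap_one_nhds_of_subset_interior
    (modelWithCornersSelf ℝ E) (n := k) hK.isClosed hK_int
  exact ⟨f, contMDiff_iff_contDiff.mp f.contMDiff, HasCompactSupport.intro hK.cthickening hf0,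
    fun x hx => hf1.self_of_nhdsSet x hx, fun x hx => hf0 x fun h => hx (hδU h),
    fun x => (hf01 x).1⟩

theorem ENNReal.limsup_le_of_forall_eventually_le_add_mul {ι : Type*} {l : Filter ι}
    {f : ι → ℝ≥0∞} {a C : ℝ≥0∞} (hC : C ≠ ⊤)
    (h : ∀ ε : ℝ, 0 < ε → ∀ᶠ i in l, f i ≤ a + ENNReal.ofReal ε * C) : limsup f l ≤ a := by
  have hlim : Tendsto (fun ε : ℝ => a + ENNReal.ofReal ε * C) (𝓝[>] 0) (𝓝 a) := by
    have hε : Tendsto (fun ε : ℝ => ENNReal.ofReal ε) (𝓝[>] 0) (𝓝 0) := by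
      simpa using
        (ENNReal.tendsto_ofReal (tendsto_id (x := 𝓝 (0 : ℝ)))).mono_left nhdsWithin_le_nhds
    simpa using tendsto_const_nhds.add (ENNReal.Tendsto.mul_const hε (Or.inr hC))
  refine ge_of_tendsto hlim ?_
  filter_upwards [self_mem_nhdsWithin] with ε hε
  exact limsup_le_of_le (by isBoundedDefault) (h ε hε)

theorem TendstoUniformly.tendsto_integral_mul {α ι : Type*} [MeasurableSpace α] {μ : Measure α}
    {l : Filter ι} {F : ι → α → ℝ} {f φ : α → ℝ}
    (hF : ∀ᶠ i in l, Integrable (fun x => F i x * φ x) μ) (hf : Integrable (fun x => f x * φ x) μ)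
    (hφ : Integrable φ μ) (hFf : TendstoUniformly F f l) :
    Tendsto (fun i => ∫ x, F i x * φ x ∂μ) l (𝓝 (∫ x, f x * φ x ∂μ)) := by
  set I := ∫ x, ‖φ x‖ ∂μ
  have hI : 0 ≤ I := integral_nonneg fun _ => norm_nonneg _
  refine Metric.tendsto_nhds.2 fun ε hε => ?_
  have hδ : 0 < ε / (I + 1) := by positivity
  filter_upwards [hF, Metric.tendstoUniformly_iff.mp hFf _ hδ] with i hFi hclose
  have hpt : ∀ x, ‖F i x * φ x - f x * φ x‖ ≤ ε / (I + 1) * ‖φ x‖ := fun x => by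
    rw [← sub_mul, norm_mul, ← dist_eq_norm, dist_comm]
    exact mul_le_mul_of_nonneg_right (hclose x).le (norm_nonneg _)
  calc dist (∫ x, F i x * φ x ∂μ) (∫ x, f x * φ x ∂μ)
      = ‖∫ x, (F i x * φ x - f x * φ x) ∂μ‖ := by rw [dist_eq_norm, integral_sub hFi hf]
    _ ≤ ∫ x, ε / (I + 1) * ‖φ x‖ ∂μ :=
        norm_integral_le_of_norm_le (hφ.norm.const_mul _) (.of_forall hpt)
    _ = ε / (I + 1) * I := integral_const_mul _ _
    _ < ε := by rw [div_mul_eq_mul_div, div_lt_iff₀ (by positivity)]; nlinarith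

theorem continuous_diverg {ξ : Euc n → Euc n} (hξ : ContDiff ℝ 1 ξ) : Continuous (diverg ξ) := by
  unfold diverg
  fun_prop

theorem HasCompactSupport.diverg {ξ : Euc n → Euc n} (hξ : HasCompactSupport ξ) :
    HasCompactSupport (diverg ξ) :=
  (hξ.fderiv ℝ).mono fun x hx h => hx (by simp [_root_.diverg, h])

theorem integrable_mul_diverg {u : Euc n → ℝ} (hu : LocallyIntegrable u) {ξ : Euc n → Euc n}
    (hξ : ContDiff ℝ 1 ξ) (hξs : HasCompactSupport ξ) :
    Integrable (fun x => u x * diverg ξ x) :=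
  hu.integrable_smul_right_of_hasCompactSupport (continuous_diverg hξ) hξs.diverg

theorem fderiv_apply_euclidean_coord {ξ : Euc n → Euc n} {x : Euc n} (hξ : DifferentiableAt ℝ ξ x)
    (i : Fin n) (v : Euc n) : fderiv ℝ (fun y => ξ y i) x v = fderiv ℝ ξ x v i :=
  congrArg (· v) ((EuclideanSpace.proj i).hasFDerivAt.comp x hξ.hasFDerivAt).fderiv

theorem ContinuousLinearMap.apply_euclidean_eq_sum (D : Euc n →L[ℝ] ℝ) (v : Euc n) :
    D v = ∑ i, D (EuclideanSpace.single i 1) * v i := by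
  conv_lhs => rw [← (EuclideanSpace.basisFun (Fin n) ℝ).sum_repr v]
  simp [map_sum, mul_comm]

theorem integral_mul_diverg {g : Euc n → ℝ} {ξ : Euc n → Euc n} (hg : ContDiff ℝ 1 g)
    (hξ : ContDiff ℝ 1 ξ) (hξs : HasCompactSupport ξ) :
    ∫ x, g x * diverg ξ x = -∫ x, fderiv ℝ g x (ξ x) := by
  set e : Fin n → Euc n := fun i => EuclideanSpace.single i 1
  have hξi : ∀ i, ContDiff ℝ 1 (fun y => ξ y i) := fun i => by fun_prop
  have hξis : ∀ i, HasCompactSupport (fun y => ξ y i) := fun i =>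
    hξs.comp_left (g := fun w : Euc n => w i) rfl
  have hdiv : ∀ x, diverg ξ x = ∑ i, fderiv ℝ (fun y => ξ y i) x (e i) := fun x =>
    Finset.sum_congr rfl fun i _ =>
      (fderiv_apply_euclidean_coord (hξ.differentiable one_ne_zero x) i (e i)).symm
  have hA : ∀ i, Integrable (fun x => g x * fderiv ℝ (fun y => ξ y i) x (e i)) := fun i =>
    (hg.continuous.mul ((hξi i).continuous_fderiv one_ne_zero |>.clm_apply
      continuous_const)).integrable_of_hasCompactSupport ((hξis i).fderiv_apply ℝ (e i)).mul_left
  have hB : ∀ i, Integrable (fun x => fderiv ℝ g x (e i) * ξ x i) := fun i =>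
    (((hg.continuous_fderiv one_ne_zero).clm_apply continuous_const).mul
      (hξi i).continuous).integrable_of_hasCompactSupport (hξis i).mul_left
  have hparts : ∀ i, ∫ x, g x * fderiv ℝ (fun y => ξ y i) x (e i)
      = -∫ x, fderiv ℝ g x (e i) * ξ x i := fun i =>
    integral_mul_fderiv_eq_neg_fderiv_mul_of_integrable (hB i) (hA i)
      ((hg.continuous.mul (hξi i).continuous).integrable_of_hasCompactSupport
        (hξis i).mul_left)
      (fun x _ => hg.differentiable one_ne_zero x)
      (fun x _ => (hξi i).differentiable one_ne_zero x)
  calc ∫ x, g x * diverg ξ x = ∑ i, ∫ x, g x * fderiv ℝ (fun y => ξ y i) x (e i) := by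
        simp_rw [hdiv, Finset.mul_sum]
        exact integral_finsetSum _ fun i _ => hA i
    _ = -∑ i, ∫ x, fderiv ℝ g x (e i) * ξ x i := by
        rw [← Finset.sum_neg_distrib]
        exact Finset.sum_congr rfl fun i _ => hparts i
    _ = -∫ x, fderiv ℝ g x (ξ x) := by
        rw [← integral_finsetSum _ fun i _ => hB i]
        simp only [e, ← ContinuousLinearMap.apply_euclidean_eq_sum]

theorem totalVariation_le_integral_norm_fderiv {g : Euc n → ℝ} (hg : ContDiff ℝ 1 g)
    (hgs : HasCompactSupport g) :
    totalVariation g ≤ ENNReal.ofReal (∫ x, ‖fderiv ℝ g x‖) := by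
  refine iSup₂_le fun ξ ⟨hξ, hξs, hξ1⟩ => ENNReal.ofReal_le_ofReal ?_
  have hDg : Integrable (fun x => ‖fderiv ℝ g x‖) :=
    (hg.continuous_fderiv one_ne_zero).norm.integrable_of_hasCompactSupport (hgs.fderiv ℝ).norm
  calc ∫ x, g x * diverg ξ x = -∫ x, fderiv ℝ g x (ξ x) := integral_mul_diverg hg hξ hξs
    _ ≤ ‖∫ x, fderiv ℝ g x (ξ x)‖ := neg_le_abs _
    _ ≤ ∫ x, ‖fderiv ℝ g x (ξ x)‖ := norm_integral_le_integral_norm _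
    _ ≤ ∫ x, ‖fderiv ℝ g x‖ :=
        integral_mono_of_nonneg (.of_forall fun _ => norm_nonneg _) hDg (.of_forall fun x =>
          (fderiv ℝ g x).le_of_opNorm_le_of_le le_rfl (hξ1 x) |>.trans_eq (mul_one _))

theorem totalVariation_add_le {u w : Euc n → ℝ} (hu : LocallyIntegrable u)
    (hw : LocallyIntegrable w) :
    totalVariation (fun x => u x + w x) ≤ totalVariation u + totalVariation w := by
  refine iSup₂_le fun ξ hξ => ?_
  have hsplit : ∫ x, (u x + w x) * diverg ξ x
      = (∫ x, u x * diverg ξ x) + ∫ x, w x * diverg ξ x := by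
    simp_rw [add_mul]
    exact integral_add (integrable_mul_diverg hu hξ.1 hξ.2.1)
      (integrable_mul_diverg hw hξ.1 hξ.2.1)
  rw [hsplit]
  exact ENNReal.ofReal_add_le.trans
    (add_le_add (le_iSup₂_of_le ξ hξ le_rfl) (le_iSup₂_of_le ξ hξ le_rfl))

theorem totalVariation_const_mul {c : ℝ} (hc : 0 ≤ c) (u : Euc n → ℝ) :
    totalVariation (fun x => c * u x) = ENNReal.ofReal c * totalVariation u := by
  simp only [totalVariation, ENNReal.mul_iSup, mul_assoc, integral_const_mul, ENNReal.ofReal_mul hc]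

theorem totalVariation_le_liminf_of_tendstoUniformly {ι : Type*} {l : Filter ι} [l.NeBot]
    {u : ι → Euc n → ℝ} {v : Euc n → ℝ} (hu : ∀ᶠ i in l, LocallyIntegrable (u i))
    (hv : LocallyIntegrable v) (huv : TendstoUniformly u v l) :
    totalVariation v ≤ liminf (fun i => totalVariation (u i)) l := by
  refine iSup₂_le fun ξ hξ => ?_
  have hlim := (ENNReal.tendsto_ofReal (huv.tendsto_integral_mul
    (hu.mono fun i hi => integrable_mul_diverg hi hξ.1 hξ.2.1)
    (integrable_mul_diverg hv hξ.1 hξ.2.1)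
    ((continuous_diverg hξ.1).integrable_of_hasCompactSupport hξ.2.1.diverg))).liminf_eq
  rw [← hlim]
  exact liminf_le_liminf (.of_forall fun i => le_iSup₂_of_le ξ hξ le_rfl)

def OutwardMinimizingFunction (Ω : Set (Euc n)) (u : Euc n → ℝ) : Prop :=
  ∀ w : Euc n → ℝ, Measurable w → Integrable w → totalVariation w < ⊤ → (∀ x, u x ≤ w x) →
    (∀ x ∉ Ω, w x = 0) → totalVariation u ≤ totalVariation w

theorem OutwardMinimizingFunction.totalVariation_le_add_mul {Ω : Set (Euc n)}
    {u v η : Euc n → ℝ} {ε : ℝ} (hu : OutwardMinimizingFunction Ω u) (hε : 0 ≤ ε)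
    (hv : Continuous v) (hvs : HasCompactSupport v) (hvTV : totalVariation v < ⊤)
    (hvΩ : ∀ x ∉ Ω, v x = 0) (hη : ContDiff ℝ 1 η) (hηs : HasCompactSupport η)
    (hηΩ : ∀ x ∉ Ω, η x = 0) (huv : ∀ x, u x ≤ v x + ε * η x) :
    totalVariation u ≤ totalVariation v + ENNReal.ofReal ε * totalVariation η := by
  have hvInt : Integrable v := hv.integrable_of_hasCompactSupport hvs
  have hηInt : Integrable η := hη.continuous.integrable_of_hasCompactSupport hηs
  have hTV : totalVariation (fun x => v x + ε * η x)
      ≤ totalVariation v + ENNReal.ofReal ε * totalVariation η := by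
    rw [← totalVariation_const_mul hε]
    exact totalVariation_add_le hvInt.locallyIntegrable (hηInt.const_mul ε).locallyIntegrable
  have hηTV : totalVariation η < ⊤ :=
    (totalVariation_le_integral_norm_fderiv hη hηs).trans_lt ENNReal.ofReal_lt_top
  refine (hu _ (hv.add (continuous_const.mul hη.continuous)).measurable
    (hvInt.add (hηInt.const_mul ε)) ?_ huv fun x hx => by simp [hvΩ x hx, hηΩ x hx]).trans hTV
  exact hTV.trans_lt (ENNReal.add_lt_top.2 ⟨hvTV, ENNReal.mul_lt_top ENNReal.ofReal_lt_top hηTV⟩)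

theorem totalVariation_convergence_general (Ω K : Set (Euc n))
    (hΩo : IsOpen Ω) (hK : IsCompact K) (hKΩ : K ⊆ Ω)
    (u : ℝ → Euc n → ℝ) (v : Euc n → ℝ)
    (husupp : ∀ h > (0 : ℝ), ∀ x ∉ K, u h x = 0)
    (huInt : ∀ h > (0 : ℝ), Integrable (u h))
    (homin : ∀ h > (0 : ℝ), ∀ w : Euc n → ℝ, Measurable w → Integrable w →
      totalVariation w < ⊤ → (∀ x, u h x ≤ w x) → (∀ x ∉ Ω, w x = 0) →
      totalVariation (u h) ≤ totalVariation w)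
    (hv : Continuous v) (hvsupp : ∀ x ∉ K, v x = 0)
    (hvTV : totalVariation v < ⊤)
    (hconv : TendstoUniformly u v (𝓝[>] (0 : ℝ))) :
    limsup (fun h => totalVariation (u h)) (𝓝[>] (0 : ℝ)) ≤ totalVariation v ∧
    Tendsto (fun h => totalVariation (u h)) (𝓝[>] (0 : ℝ))
      (𝓝 (totalVariation v)) := by
  obtain ⟨η, hη, hηs, hηK, hηΩ, hη0⟩ := exists_contDiff_cutoff hK hΩo hKΩ 1
  have hvs : HasCompactSupport v := HasCompactSupport.intro hK hvsupp
  have hηTV : totalVariation η ≠ ⊤ :=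
    ((totalVariation_le_integral_norm_fderiv hη hηs).trans_lt ENNReal.ofReal_lt_top).ne
  have hupper : ∀ ε : ℝ, 0 < ε → ∀ᶠ h in 𝓝[>] 0,
      totalVariation (u h) ≤ totalVariation v + ENNReal.ofReal ε * totalVariation η := by
    intro ε hε
    filter_upwards [Metric.tendstoUniformly_iff.mp hconv ε hε, self_mem_nhdsWithin]
      with h hclose hh
    refine OutwardMinimizingFunction.totalVariation_le_add_mul (homin h hh) hε.le hv hvs hvTV
      (fun x hx => hvsupp x fun hxK => hx (hKΩ hxK)) hη hηs hηΩ fun x => ?_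
    by_cases hx : x ∈ K
    · have hux := hclose x
      rw [Real.dist_eq, abs_lt] at hux
      rw [hηK x hx, mul_one]
      linarith
    · rw [husupp h hh x hx, hvsupp x hx]
      exact add_nonneg le_rfl (mul_nonneg hε.le (hη0 x))
  have hlimsup := ENNReal.limsup_le_of_forall_eventually_le_add_mul hηTV hupper
  have hliminf := totalVariation_le_liminf_of_tendstoUniformly (l := 𝓝[>] (0 : ℝ))
    (eventually_mem_nhdsWithin.mono fun h hh => (huInt h hh).locallyIntegrable)
    (hv.integrable_of_hasCompactSupport hvs).locallyIntegrable hconv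
  exact ⟨hlimsup, tendsto_of_le_liminf_of_limsup_le hliminf hlimsup⟩

/-- Convergence of total variations for the arrival times: uniform convergence
of the outward minimizing functions `u_h` to a continuous `BV` function `u`
implies `limsup ∫|Du_h| ≤ ∫|Du|` and hence `∫|Du_h| → ∫|Du|`. -/
theorem totalVariation_convergence (Ω K : Set (Euc n))
    (hΩo : IsOpen Ω) (hΩb : IsBounded Ω) (hK : IsCompact K) (hKΩ : K ⊆ Ω)
    (u : ℝ → Euc n → ℝ) (v : Euc n → ℝ)
    (humeas : ∀ h > (0 : ℝ), Measurable (u h))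
    (hunn : ∀ h > (0 : ℝ), ∀ x, 0 ≤ u h x)
    (husupp : ∀ h > (0 : ℝ), ∀ x ∉ K, u h x = 0)
    (huInt : ∀ h > (0 : ℝ), Integrable (u h))
    (huTV : ∀ h > (0 : ℝ), totalVariation (u h) < ⊤)
    (homin : ∀ h > (0 : ℝ), ∀ w : Euc n → ℝ, Measurable w → Integrable w →
      totalVariation w < ⊤ → (∀ x, u h x ≤ w x) → (∀ x ∉ Ω, w x = 0) →
      totalVariation (u h) ≤ totalVariation w)
    (hv : Continuous v) (hvsupp : ∀ x ∉ K, v x = 0)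
    (hvInt : Integrable v) (hvTV : totalVariation v < ⊤)
    (hconv : TendstoUniformly u v (𝓝[>] (0 : ℝ))) :
    limsup (fun h => totalVariation (u h)) (𝓝[>] (0 : ℝ)) ≤ totalVariation v ∧
    Tendsto (fun h => totalVariation (u h)) (𝓝[>] (0 : ℝ))
      (𝓝 (totalVariation v)) :=
  totalVariation_convergence_general Ω K hΩo hK hKΩ u v husupp huInt homin hv hvsupp hvTV hconv

end
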